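/- For 0 < q < 1, integers a, F with 0 < a < F and F odd, and s ∈ ℂ with Re(s) > 1: the partial zeta function H_{q,E}(s,a,F) := [2]_q Σ_{m > 0, m ≡ a mod F} (-1)^m q^{ms}/[m]_q^s satisfies H_{q,E}(s,a,F) = ([2]_q/[2]_{q^F}) [F]_q^{-s} (-1)^a q^{sa} ζ_{q^F,E}(s, a/F). -/

import Mathlib

/-!
The residue class `m ≡ a (mod F)`, `m > 0`, is exactly `{a + n F | n ∈ ℕ}`. Along it the sign splits
as `(-1)^(a + n F) = (-1)^a (-1)^n` because `F` is odd, the weight splits as `q^{(a + n F) s} =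
q^{a s} (q^F)^{n s}`, and the `q`-integer factors as `[a + n F]_q = [F]_q [n + a/F]_{q^F}`. Hence
every term of the partial zeta function is a fixed multiple of the corresponding term of
`ζ_{q^F,E}(s, a/F)`.
-/

theorem tsum_eq_tsum_add_mul_of_mod_ne {α : Type*} [AddCommMonoid α] [TopologicalSpace α]
    {f : ℕ → α} {a F : ℕ} (hF : 0 < F) (hf : ∀ m, m % F ≠ a → f m = 0) :
    ∑' m, f m = ∑' n, f (a + n * F) := by
  have hinj : Function.Injective (fun n : ℕ => a + n * F) := fun m n h =>
    Nat.eq_of_mul_eq_mul_right hF (Nat.add_left_cancel h)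
  refine (hinj.tsum_eq fun m hm => ?_).symm
  have hmod : m % F = a := by_contra fun h => hm (hf m h)
  exact ⟨m / F, by simp only; rw [← hmod, Nat.mul_comm]; exact Nat.mod_add_div m F⟩

theorem neg_one_pow_add_mul_of_odd {R : Type*} [Monoid R] [HasDistribNeg R] {F : ℕ}
    (hF : Odd F) (a n : ℕ) : (-1 : R) ^ (a + n * F) = (-1) ^ a * (-1) ^ n := by
  rw [pow_add, mul_comm n F, pow_mul, hF.neg_one_pow]

theorem Real.pow_rpow_natCast_add_div {q : ℝ} (hq : 0 ≤ q) {F : ℕ} (hF : F ≠ 0) (a n : ℕ) :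
    (q ^ F) ^ ((n : ℝ) + a / F) = q ^ (a + n * F) := by
  rw [← Real.rpow_natCast q F, ← Real.rpow_mul hq, ← Real.rpow_natCast]
  congr 1
  field_simp
  push_cast
  ring

theorem Real.log_div_eq_log_div_add_log_div {x y z : ℝ} (hx : x ≠ 0) (hy : y ≠ 0) (hz : z ≠ 0) :
    Real.log (x / z) = Real.log (x / y) + Real.log (y / z) := by
  rw [Real.log_div hx hz, Real.log_div hx hy, Real.log_div hy hz]
  ring

theorem one_sub_pow_ne_zero {q : ℝ} (hq0 : 0 < q) (hq1 : q < 1) {k : ℕ} (hk : k ≠ 0) :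
    1 - q ^ k ≠ 0 :=
  (sub_pos.mpr (pow_lt_one₀ hq0.le hq1 hk)).ne'

theorem log_qInt_add_mul {q : ℝ} (hq0 : 0 < q) (hq1 : q < 1) {a F n : ℕ} (hF : F ≠ 0)
    (hm : a + n * F ≠ 0) :
    Real.log ((1 - q ^ (a + n * F)) / (1 - q)) =
      Real.log ((1 - q ^ F) / (1 - q)) +
        Real.log ((1 - (q ^ F) ^ ((n : ℝ) + a / F)) / (1 - q ^ F)) := by
  rw [Real.pow_rpow_natCast_add_div hq0.le hF, add_comm (Real.log _)]
  exact Real.log_div_eq_log_div_add_log_div (one_sub_pow_ne_zero hq0 hq1 hm)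
    (one_sub_pow_ne_zero hq0 hq1 hF) (sub_pos.mpr hq1).ne'

theorem partial_zeta_term_add_mul {q : ℝ} (hq0 : 0 < q) (hq1 : q < 1) {a F : ℕ} (hF : Odd F)
    (n : ℕ) (hm : a + n * F ≠ 0) (s : ℂ) :
    (-1 : ℂ) ^ (a + n * F) * Complex.exp (s * ((a + n * F : ℕ) : ℂ) * (Real.log q : ℂ)) /
        Complex.exp (s * (Real.log ((1 - q ^ (a + n * F)) / (1 - q)) : ℂ)) =
      (-1) ^ a * Complex.exp (s * (a : ℂ) * (Real.log q : ℂ)) *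
        Complex.exp (-s * (Real.log ((1 - q ^ F) / (1 - q)) : ℂ)) *
        ((-1) ^ n * Complex.exp (s * (n : ℂ) * (Real.log (q ^ F) : ℂ)) /
          Complex.exp (s * (Real.log
            ((1 - (q ^ F) ^ ((n : ℝ) + (a : ℝ) / (F : ℝ))) / (1 - q ^ F)) : ℂ))) := by
  have hF0 : F ≠ 0 := by rintro rfl; exact Nat.not_odd_zero hF
  rw [log_qInt_add_mul hq0 hq1 hF0 hm, neg_one_pow_add_mul_of_odd hF, Real.log_pow,
    neg_mul, Complex.exp_neg]
  push_cast
  rw [show s * (a + n * F) * Real.log q = s * a * Real.log q + s * n * (F * Real.log q) by ring,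
    mul_add s, Complex.exp_add, Complex.exp_add]
  field_simp

theorem q_euler_partial_zeta_general (q : ℝ) (hq0 : 0 < q) (hq1 : q < 1)
    (a F : ℕ) (ha : 0 < a) (haF : a < F) (hF : Odd F)
    (s : ℂ) :
    ((1 + q : ℝ) : ℂ) * ∑' m : ℕ, (if 0 < m ∧ m % F = a % F then
        (-1 : ℂ) ^ m * Complex.exp (s * (m : ℂ) * (Real.log q : ℂ)) /
          Complex.exp (s * (Real.log ((1 - q ^ m) / (1 - q)) : ℂ)) else 0)
      = (((1 + q) / (1 + q ^ F) : ℝ) : ℂ) *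
        Complex.exp (-s * (Real.log ((1 - q ^ F) / (1 - q)) : ℂ)) * (-1) ^ a *
        Complex.exp (s * (a : ℂ) * (Real.log q : ℂ)) *
        (((1 + q ^ F : ℝ) : ℂ) * ∑' n : ℕ, (-1) ^ n *
          Complex.exp (s * (n : ℂ) * (Real.log (q ^ F) : ℂ)) /
          Complex.exp (s * (Real.log
            ((1 - (q ^ F) ^ ((n : ℝ) + (a : ℝ) / (F : ℝ))) / (1 - q ^ F)) : ℂ))) := by
  have hsupp : ∀ m, m % F ≠ a → ¬(0 < m ∧ m % F = a % F) := fun m hm h =>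
    hm (h.2.trans (Nat.mod_eq_of_lt haF))
  have hcond : ∀ n, 0 < a + n * F ∧ (a + n * F) % F = a % F := fun n =>
    ⟨Nat.add_pos_left ha _, Nat.add_mul_mod_self_right a n F⟩
  rw [tsum_eq_tsum_add_mul_of_mod_ne (ha.trans haF) fun m hm => if_neg (hsupp m hm)]
  simp only [hcond, and_self, if_true,
    partial_zeta_term_add_mul hq0 hq1 hF _ (Nat.add_pos_left ha _).ne', tsum_mul_left]
  have hcoeff :
      (((1 + q) / (1 + q ^ F) : ℝ) : ℂ) * ((1 + q ^ F : ℝ) : ℂ) = ((1 + q : ℝ) : ℂ) := by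
    rw [← Complex.ofReal_mul, div_mul_cancel₀ _ (by positivity)]
  rw [← hcoeff]
  ring

/-- Partial zeta function: for `0 < q < 1`, integers `0 < a < F` with `F` odd
and `Re s > 1`,
`H_{q,E}(s,a,F) = [2]_q Σ_{m>0, m≡a (F)} (-1)^m q^{ms}/[m]_q^s
  = ([2]_q/[2]_{q^F}) [F]_q^{-s} (-1)^a q^{sa} ζ_{q^F,E}(s, a/F)`. -/
theorem q_euler_partial_zeta (q : ℝ) (hq0 : 0 < q) (hq1 : q < 1)
    (a F : ℕ) (ha : 0 < a) (haF : a < F) (hF : Odd F)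
    (s : ℂ) (hs : 1 < s.re) :
    ((1 + q : ℝ) : ℂ) * ∑' m : ℕ, (if 0 < m ∧ m % F = a % F then
        (-1 : ℂ) ^ m * Complex.exp (s * (m : ℂ) * (Real.log q : ℂ)) /
          Complex.exp (s * (Real.log ((1 - q ^ m) / (1 - q)) : ℂ)) else 0)
      = (((1 + q) / (1 + q ^ F) : ℝ) : ℂ) *
        Complex.exp (-s * (Real.log ((1 - q ^ F) / (1 - q)) : ℂ)) * (-1) ^ a *
        Complex.exp (s * (a : ℂ) * (Real.log q : ℂ)) *
        (((1 + q ^ F : ℝ) : ℂ) * ∑' n : ℕ, (-1) ^ n *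
          Complex.exp (s * (n : ℂ) * (Real.log (q ^ F) : ℂ)) /
          Complex.exp (s * (Real.log
            ((1 - (q ^ F) ^ ((n : ℝ) + (a : ℝ) / (F : ℝ))) / (1 - q ^ F)) : ℂ))) :=
  q_euler_partial_zeta_general q hq0 hq1 a F ha haF hF s
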